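/- If Y is sequentially complete, then Q([0,T];Y) coincides with the set of all functions f : [0,T] → Y that are continuous at every point t ∈ (T·ℚ^∁) ∩ [0,T] (irrational multiples of T), have a right limit at every t ∈ [0,T), and have a left limit at every t ∈ (0,T]. -/

import Mathlib

open Filter Topology Set

noncomputable section

/-- The path space `Y^{[0,T]}` equipped with the topology (uniformity) of uniform
convergence. -/
abbrev PathSpace (Y : Type*) [UniformSpace Y] (T : ℝ) : Type _ :=
  UniformFun (Set.Icc (0 : ℝ) T) Y

/-- `Q_n([0,T];Y)`: functions that are constant on every open interval
`(t_{i-1}^n, t_i^n)` where `t_i^n = i T / n`, `1 ≤ i ≤ n`. -/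
def Qn (Y : Type*) [UniformSpace Y] (T : ℝ) (n : ℕ) : Set (PathSpace Y T) :=
  {f | ∀ i : ℕ, 1 ≤ i → i ≤ n → ∀ s t : Set.Icc (0 : ℝ) T,
      ((i : ℝ) - 1) * T / n < (s : ℝ) → (s : ℝ) < (i : ℝ) * T / n →
      ((i : ℝ) - 1) * T / n < (t : ℝ) → (t : ℝ) < (i : ℝ) * T / n →
      UniformFun.toFun f s = UniformFun.toFun f t}

/-- `Q_∞([0,T];Y) = ⋃_{n ∈ ℕ} Q_n([0,T];Y)`. -/
def Qinfty (Y : Type*) [UniformSpace Y] (T : ℝ) : Set (PathSpace Y T) :=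
  ⋃ n ∈ Set.Ici 1, Qn Y T n

/-- `Q([0,T];Y)`: the closure of `Q_∞([0,T];Y)` in the topology of uniform convergence. -/
def Qspace (Y : Type*) [UniformSpace Y] (T : ℝ) : Set (PathSpace Y T) :=
  closure (Qinfty Y T)

/-- `C([0,T];Y)` viewed inside the path space. -/
def Cspace (Y : Type*) [UniformSpace Y] (T : ℝ) : Set (PathSpace Y T) :=
  {f | Continuous (UniformFun.toFun f)}

/-!
Every element of `Q_∞` is constant on a one-sided neighbourhood of each point, and on a full
neighbourhood of each point that is not a grid point `j T / n`, in particular of each irrational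
multiple of `T`. Along a filter `l`, the Cauchy-type condition `map f l ×ˢ map f l ≤ 𝓤 Y` survives
uniform limits; along the countably generated filters `𝓝[>] t` and `𝓝[<] t` sequential
completeness turns it into the existence of a one-sided limit, and along `𝓝 t` it is continuity.

Conversely, if `f` has one-sided limits and is continuous at the irrational multiples of `T`, every
`t` has a radius within which the oscillation of `f` on each side of `t` is small, and on both sides
at once when `t / T` is irrational. Finitely many of these balls cover `[0, T]`. Take `n` so that
the finitely many rational centres are grid points and `T / n` is below a Lebesgue number of the
cover. Then sampling `f` at the grid points and at the midpoints of the grid cells gives an element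
of `Q_n` uniformly close to `f`.
-/

open scoped Uniformity

section UniformSpace

variable {α β : Type*} [UniformSpace β]

theorem Filter.EventuallyConst.tendsto_uniformity {f : α → β} {l : Filter α}
    (hf : EventuallyConst f l) : Tendsto (fun p : α × α => (f p.1, f p.2)) (l ×ˢ l) (𝓤 β) := by
  obtain ⟨A, hA, hAs⟩ := hf
  have hA' : f ⁻¹' A ∈ l := hA
  refine fun V hV => mem_map.2 <| mem_of_superset (prod_mem_prod hA' hA') fun p hp => ?_
  simpa only [mem_preimage, hAs hp.1 hp.2] using refl_mem_uniformity hV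

theorem Filter.Tendsto.tendsto_uniformity {f : α → β} {l : Filter α} {y : β}
    (hf : Tendsto f l (𝓝 y)) : Tendsto (fun p : α × α => (f p.1, f p.2)) (l ×ˢ l) (𝓤 β) :=
  (hf.prodMap hf).mono_right cauchy_nhds.2

theorem continuousAt_of_tendsto_uniformity [TopologicalSpace α] {f : α → β} {x : α}
    (hf : Tendsto (fun p : α × α => (f p.1, f p.2)) (𝓝 x ×ˢ 𝓝 x) (𝓤 β)) : ContinuousAt f x :=
  le_nhds_of_cauchy_adhp (cauchy_map_iff.2 ⟨inferInstance, hf⟩)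
    ((ClusterPt.of_le_nhds (pure_le_nhds (f x))).mono
      (pure_le_iff.2 fun _ hs => (mem_of_mem_nhds (mem_map.1 hs) : x ∈ f ⁻¹' _)))

theorem Cauchy.exists_le_nhds_of_cauchySeq_tendsto {l : Filter β} [l.IsCountablyGenerated]
    (hl : Cauchy l) (hseq : ∀ u : ℕ → β, CauchySeq u → ∃ y, Tendsto u atTop (𝓝 y)) :
    ∃ y, l ≤ 𝓝 y := by
  have := hl.1
  obtain ⟨u, hu⟩ := exists_seq_tendsto l
  obtain ⟨y, hy⟩ := hseq u (hl.mono hu)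
  exact ⟨y, le_nhds_of_cauchy_adhp hl ((ClusterPt.of_le_nhds hy).mono hu)⟩

theorem UniformFun.isClosed_setOf_tendsto_uniformity (l : Filter α) :
    IsClosed {f : UniformFun α β |
      Tendsto (fun p : α × α => (toFun f p.1, toFun f p.2)) (l ×ˢ l) (𝓤 β)} := by
  refine isClosed_of_closure_subset fun f hf U hU => ?_
  obtain ⟨W, hW, hWs, hWU⟩ := comp_comp_symm_mem_uniformity_sets hU
  obtain ⟨g, hg, hfg⟩ := (mem_closure_iff_nhds_basis (UniformFun.hasBasis_nhds α β f)).1 hf W hW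
  have hgW : ∀ᶠ p in l ×ˢ l, (toFun g p.1, toFun g p.2) ∈ W := hg hW
  exact hgW.mono fun p hp => hWU ⟨toFun g p.2, ⟨toFun g p.1, hfg p.1, hp⟩, hWs.symm _ _ (hfg p.2)⟩

end UniformSpace

section Radius

variable {X β : Type*} [PseudoMetricSpace X] [UniformSpace β]

open Metric in
theorem exists_radius_of_tendsto_uniformity [Preorder X] {f : X → β} {t : X} {p : Prop}
    (hlt : Tendsto (fun q : X × X => (f q.1, f q.2)) (𝓝[<] t ×ˢ 𝓝[<] t) (𝓤 β))
    (hgt : Tendsto (fun q : X × X => (f q.1, f q.2)) (𝓝[>] t ×ˢ 𝓝[>] t) (𝓤 β))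
    (hp : p → Tendsto (fun q : X × X => (f q.1, f q.2)) (𝓝 t ×ˢ 𝓝 t) (𝓤 β))
    {V : SetRel β β} (hV : V ∈ 𝓤 β) :
    ∃ δ > 0, ∀ s ∈ ball t δ, ∀ s' ∈ ball t δ,
      (s < t ∧ s' < t ∨ t < s ∧ t < s' ∨ p) → (f s, f s') ∈ V := by
  by_cases h : p
  · obtain ⟨δ, hδ, hδV⟩ := nhds_basis_ball.prod_self.tendsto_left_iff.1 (hp h) V hV
    exact ⟨δ, hδ, fun s hs s' hs' _ => hδV (x := (s, s')) ⟨hs, hs'⟩⟩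
  obtain ⟨δ₁, hδ₁, h₁⟩ := nhdsWithin_basis_ball.prod_self.tendsto_left_iff.1 hlt V hV
  obtain ⟨δ₂, hδ₂, h₂⟩ := nhdsWithin_basis_ball.prod_self.tendsto_left_iff.1 hgt V hV
  have hball₁ := ball_subset_ball (x := t) (min_le_left δ₁ δ₂)
  have hball₂ := ball_subset_ball (x := t) (min_le_right δ₁ δ₂)
  refine ⟨min δ₁ δ₂, lt_min hδ₁ hδ₂, fun s hs s' hs' => ?_⟩
  rintro (⟨hst, hs't⟩ | ⟨hts, hts'⟩ | hp)
  · exact h₁ (x := (s, s')) ⟨⟨hball₁ hs, hst⟩, hball₁ hs', hs't⟩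
  · exact h₂ (x := (s, s')) ⟨⟨hball₂ hs, hts⟩, hball₂ hs', hts'⟩
  · exact absurd hp h

open Metric in
theorem exists_finset_lebesgue_number [CompactSpace X] (δ : X → ℝ) (hδ : ∀ x, 0 < δ x) :
    ∃ S : Finset X, ∃ ε > 0, ∀ x, ∃ t ∈ S, ball x ε ⊆ ball t (δ t) := by
  obtain ⟨S, hS⟩ := isCompact_univ.elim_finite_subcover (fun t => ball t (δ t))
    (fun _ => isOpen_ball) fun x _ => mem_iUnion.2 ⟨x, mem_ball_self (hδ x)⟩
  obtain ⟨ε, hε, hεS⟩ := lebesgue_number_lemma_of_metric isCompact_univ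
    (c := fun t : S => ball (t : X) (δ t)) (fun _ => isOpen_ball)
    (by simpa [iUnion_subtype] using hS)
  exact ⟨S, ε, hε, fun x => let ⟨⟨t, ht⟩, h⟩ := hεS x trivial; ⟨t, ht, h⟩⟩

end Radius

theorem exists_nat_ge_forall_mul_eq_intCast (s : Finset ℝ) (N : ℕ) :
    ∃ n ≥ N, ∀ x ∈ s, ¬Irrational x → ∃ j : ℤ, x * n = j := by
  classical
  induction s using Finset.induction_on with
  | empty => exact ⟨N, le_rfl, by simp⟩
  | insert x s _ ih =>
    obtain ⟨n, hn, hs⟩ := ih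
    by_cases hx : Irrational x
    · refine ⟨n, hn, fun y hy hyirr => ?_⟩
      rcases Finset.mem_insert.1 hy with rfl | hy
      · exact absurd hx hyirr
      · exact hs y hy hyirr
    obtain ⟨q, rfl⟩ := not_not.1 hx
    refine ⟨n * q.den, hn.trans (Nat.le_mul_of_pos_right _ q.pos), fun y hy hyirr => ?_⟩
    rcases Finset.mem_insert.1 hy with rfl | hy
    · refine ⟨q.num * n, ?_⟩
      have hq : (q : ℝ) * q.den = q.num := by exact_mod_cast Rat.mul_den_eq_num q
      push_cast
      rw [← hq]
      ring
    · obtain ⟨j, hj⟩ := hs y hy hyirr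
      exact ⟨j * q.den, by push_cast; rw [← hj]; ring⟩

section Cell

/-- For integral `a` this is `a`; otherwise it is the midpoint of the unit cell containing `a`. -/
def cellMid (a : ℝ) : ℝ := (⌊a⌋ + ⌈a⌉) / 2

theorem cellMid_intCast (k : ℤ) : cellMid k = k := by
  simp [cellMid]

theorem cellMid_of_mem_Ioo {a : ℝ} {k : ℤ} (h : a ∈ Ioo (k : ℝ) (k + 1)) :
    cellMid a = k + 1 / 2 := by
  have hfloor : ⌊a⌋ = k := Int.floor_eq_iff.2 ⟨h.1.le, h.2⟩
  have hceil : ⌈a⌉ = k + 1 :=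
    Int.ceil_eq_iff.2 ⟨by push_cast; linarith [h.1], by push_cast; exact h.2.le⟩
  rw [cellMid, hfloor, hceil]
  push_cast
  ring

theorem abs_cellMid_sub_le (a : ℝ) : |cellMid a - a| ≤ 1 / 2 := by
  have h₁ := Int.floor_le a
  have h₂ := Int.le_ceil a
  have h₃ : (⌈a⌉ : ℝ) ≤ ⌊a⌋ + 1 := by exact_mod_cast Int.ceil_le_floor_add_one a
  rw [cellMid, abs_le]
  constructor <;> linarith

theorem cellMid_lt_intCast_iff {a : ℝ} {k : ℤ} : cellMid a < k ↔ a < k := by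
  have hfc : (⌊a⌋ : ℝ) ≤ ⌈a⌉ := by exact_mod_cast Int.floor_le_ceil a
  constructor
  · intro h
    exact Int.floor_lt.1 (by exact_mod_cast (by rw [cellMid] at h; linarith : (⌊a⌋ : ℝ) < k))
  · intro h
    have h₁ : (⌊a⌋ : ℝ) < k := by exact_mod_cast Int.floor_lt.2 h
    have h₂ : (⌈a⌉ : ℝ) ≤ k := by exact_mod_cast Int.ceil_le.2 h.le
    rw [cellMid]
    linarith

theorem intCast_lt_cellMid_iff {a : ℝ} {k : ℤ} : (k : ℝ) < cellMid a ↔ (k : ℝ) < a := by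
  have hfc : (⌊a⌋ : ℝ) ≤ ⌈a⌉ := by exact_mod_cast Int.floor_le_ceil a
  constructor
  · intro h
    exact Int.lt_ceil.1 (by exact_mod_cast (by rw [cellMid] at h; linarith : (k : ℝ) < ⌈a⌉))
  · intro h
    have h₁ : (k : ℝ) < ⌈a⌉ := by exact_mod_cast Int.lt_ceil.2 h
    have h₂ : (k : ℝ) ≤ ⌊a⌋ := by exact_mod_cast Int.le_floor.2 h.le
    rw [cellMid]
    linarith

end Cell

section Grid

variable {Y : Type*} [UniformSpace Y] {T : ℝ} {n : ℕ}

theorem mul_div_lt_iff_lt_mul_div (hT : 0 < T) (hn : 0 < n) {c x : ℝ} :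
    c * T / n < x ↔ c < x * n / T := by
  rw [div_lt_iff₀ (by exact_mod_cast hn), lt_div_iff₀ hT]

theorem lt_mul_div_iff_mul_div_lt (hT : 0 < T) (hn : 0 < n) {c x : ℝ} :
    x < c * T / n ↔ x * n / T < c := by
  rw [lt_div_iff₀ (by exact_mod_cast hn), div_lt_iff₀ hT]

theorem mul_div_lt_mul_div_iff (hT : 0 < T) (hn : 0 < n) {x y : ℝ} :
    x * n / T < y * n / T ↔ x < y := by
  rw [div_lt_div_iff_of_pos_right hT, mul_lt_mul_iff_of_pos_right (by exact_mod_cast hn)]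

/-- In the coordinate `s * n / T` the grid cells become the unit intervals `(k, k + 1)`. -/
theorem mem_Qn_iff (hT : 0 < T) (hn : 0 < n) {g : PathSpace Y T} :
    g ∈ Qn Y T n ↔ ∀ (k : ℤ) (s s' : Icc (0 : ℝ) T), (s : ℝ) * n / T ∈ Ioo (k : ℝ) (k + 1) →
      (s' : ℝ) * n / T ∈ Ioo (k : ℝ) (k + 1) → UniformFun.toFun g s = UniformFun.toFun g s' := by
  simp only [Qn, mem_ofPred_eq, mem_Ioo, mul_div_lt_iff_lt_mul_div hT hn,
    lt_mul_div_iff_mul_div_lt hT hn]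
  constructor
  · rintro hg k s s' ⟨hs₁, hs₂⟩ ⟨hs'₁, hs'₂⟩
    have hs₀ : 0 ≤ (s : ℝ) * n / T := by have := s.2.1; positivity
    have hsn : (s : ℝ) * n / T ≤ n := by
      rw [div_le_iff₀ hT, mul_comm]; exact mul_le_mul_of_nonneg_left s.2.2 (Nat.cast_nonneg n)
    have hk₀ : 0 ≤ k := by
      have : (-1 : ℝ) < k := by linarith
      exact_mod_cast this
    have hkn : k < n := by exact_mod_cast hs₁.trans_le hsn
    lift k to ℕ using hk₀
    push_cast at hs₁ hs₂ hs'₁ hs'₂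
    exact hg (k + 1) (by omega) (by omega) s s' (by push_cast; linarith) (by push_cast; linarith)
      (by push_cast; linarith) (by push_cast; linarith)
  · intro hg i hi₁ _ s s' h₁ h₂ h₃ h₄
    exact hg (i - 1) s s' (by push_cast [hi₁]; exact ⟨h₁, by linarith⟩)
      (by push_cast [hi₁]; exact ⟨h₃, by linarith⟩)

end Grid

section Forward

variable {Y : Type*} [UniformSpace Y] {T : ℝ} {n : ℕ}

theorem eventuallyConst_of_mem_Qn (hT : 0 < T) (hn : 0 < n) {g : PathSpace Y T}
    (hg : g ∈ Qn Y T n) {l : Filter (Icc (0 : ℝ) T)} {k : ℤ}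
    (hk : (fun s : Icc (0 : ℝ) T => (s : ℝ) * n / T) ⁻¹' Ioo (k : ℝ) (k + 1) ∈ l) :
    EventuallyConst (UniformFun.toFun g) l :=
  ⟨_, image_mem_map hk, by
    rintro _ ⟨s, hs, rfl⟩ _ ⟨s', hs', rfl⟩
    exact (mem_Qn_iff hT hn).1 hg k s s' hs hs'⟩

theorem cell_mem_nhdsGT (hT : 0 < T) (hn : 0 < n) (t : Icc (0 : ℝ) T) :
    (fun s : Icc (0 : ℝ) T => (s : ℝ) * n / T) ⁻¹'
      Ioo (⌊(t : ℝ) * n / T⌋ : ℝ) (⌊(t : ℝ) * n / T⌋ + 1) ∈ 𝓝[>] t := by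
  have hup : {s : Icc (0 : ℝ) T | (s : ℝ) * n / T < ⌊(t : ℝ) * n / T⌋ + 1} ∈ 𝓝 t :=
    (isOpen_lt (by fun_prop) continuous_const).mem_nhds (Int.lt_floor_add_one ((t : ℝ) * n / T))
  filter_upwards [self_mem_nhdsWithin, mem_nhdsWithin_of_mem_nhds hup] with s hts hs
  exact ⟨(Int.floor_le _).trans_lt ((mul_div_lt_mul_div_iff hT hn).2 hts), hs⟩

theorem cell_mem_nhdsLT (hT : 0 < T) (hn : 0 < n) (t : Icc (0 : ℝ) T) :
    (fun s : Icc (0 : ℝ) T => (s : ℝ) * n / T) ⁻¹'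
      Ioo ((⌈(t : ℝ) * n / T⌉ - 1 : ℤ) : ℝ) ((⌈(t : ℝ) * n / T⌉ - 1 : ℤ) + 1) ∈ 𝓝[<] t := by
  have hlow : {s : Icc (0 : ℝ) T | ((⌈(t : ℝ) * n / T⌉ - 1 : ℤ) : ℝ) < (s : ℝ) * n / T} ∈ 𝓝 t :=
    (isOpen_lt continuous_const (by fun_prop)).mem_nhds
      (show ((⌈(t : ℝ) * n / T⌉ - 1 : ℤ) : ℝ) < (t : ℝ) * n / T by
        push_cast; linarith [Int.ceil_lt_add_one ((t : ℝ) * n / T)])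
  filter_upwards [self_mem_nhdsWithin, mem_nhdsWithin_of_mem_nhds hlow] with s hst hs
  refine ⟨hs, ?_⟩
  push_cast
  linarith [Int.le_ceil ((t : ℝ) * n / T), (mul_div_lt_mul_div_iff hT hn).2 hst]

theorem cell_mem_nhds {t : Icc (0 : ℝ) T} (ht : ∀ j : ℤ, (t : ℝ) * n / T ≠ j) :
    (fun s : Icc (0 : ℝ) T => (s : ℝ) * n / T) ⁻¹'
      Ioo (⌊(t : ℝ) * n / T⌋ : ℝ) (⌊(t : ℝ) * n / T⌋ + 1) ∈ 𝓝 t :=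
  (isOpen_Ioo.preimage (by fun_prop)).mem_nhds
    ⟨(Int.floor_le _).lt_of_ne (ht _).symm, Int.lt_floor_add_one _⟩

theorem tendsto_uniformity_of_mem_Qspace {l : Filter (Icc (0 : ℝ) T)}
    (hl : ∀ n : ℕ, 0 < n → ∀ g ∈ Qn Y T n, EventuallyConst (UniformFun.toFun g) l)
    {f : PathSpace Y T} (hf : f ∈ Qspace Y T) :
    Tendsto (fun p => (UniformFun.toFun f p.1, UniformFun.toFun f p.2)) (l ×ˢ l) (𝓤 Y) := by
  refine closure_minimal (fun g hg => ?_) (UniformFun.isClosed_setOf_tendsto_uniformity l) hf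
  obtain ⟨n, hn, hgn⟩ := mem_iUnion₂.1 hg
  exact (hl n hn g hgn).tendsto_uniformity

theorem exists_tendsto_of_mem_Qspace {l : Filter (Icc (0 : ℝ) T)} [l.NeBot]
    [l.IsCountablyGenerated]
    (hl : ∀ n : ℕ, 0 < n → ∀ g ∈ Qn Y T n, EventuallyConst (UniformFun.toFun g) l)
    (hseq : ∀ u : ℕ → Y, CauchySeq u → ∃ y, Tendsto u atTop (𝓝 y))
    {f : PathSpace Y T} (hf : f ∈ Qspace Y T) :
    ∃ y, Tendsto (UniformFun.toFun f) l (𝓝 y) :=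
  have hf_cauchy : Cauchy (map (UniformFun.toFun f) l) :=
    cauchy_map_iff.2 ⟨‹_›, tendsto_uniformity_of_mem_Qspace hl hf⟩
  hf_cauchy.exists_le_nhds_of_cauchySeq_tendsto hseq

theorem exists_tendsto_nhdsGT_of_mem_Qspace (hT : 0 < T)
    (hseq : ∀ u : ℕ → Y, CauchySeq u → ∃ y, Tendsto u atTop (𝓝 y))
    {f : PathSpace Y T} (hf : f ∈ Qspace Y T) {t : Icc (0 : ℝ) T} (ht : (t : ℝ) < T) :
    ∃ y, Tendsto (UniformFun.toFun f) (𝓝[>] t) (𝓝 y) :=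
  have := nhdsGT_neBot_of_exists_gt (a := t) ⟨⟨T, hT.le, le_rfl⟩, ht⟩
  exists_tendsto_of_mem_Qspace
    (fun _ hn _ hg => eventuallyConst_of_mem_Qn hT hn hg (cell_mem_nhdsGT hT hn t)) hseq hf

theorem exists_tendsto_nhdsLT_of_mem_Qspace (hT : 0 < T)
    (hseq : ∀ u : ℕ → Y, CauchySeq u → ∃ y, Tendsto u atTop (𝓝 y))
    {f : PathSpace Y T} (hf : f ∈ Qspace Y T) {t : Icc (0 : ℝ) T} (ht : 0 < (t : ℝ)) :
    ∃ y, Tendsto (UniformFun.toFun f) (𝓝[<] t) (𝓝 y) :=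
  have := nhdsLT_neBot_of_exists_lt (b := t) ⟨⟨0, le_rfl, hT.le⟩, ht⟩
  exists_tendsto_of_mem_Qspace
    (fun _ hn _ hg => eventuallyConst_of_mem_Qn hT hn hg (cell_mem_nhdsLT hT hn t)) hseq hf

theorem continuousAt_of_mem_Qspace (hT : 0 < T) {f : PathSpace Y T} (hf : f ∈ Qspace Y T)
    {t : Icc (0 : ℝ) T} (ht : ∀ n : ℕ, 0 < n → ∀ j : ℤ, (t : ℝ) * n / T ≠ j) :
    ContinuousAt (UniformFun.toFun f) t :=
  continuousAt_of_tendsto_uniformity <| tendsto_uniformity_of_mem_Qspace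
    (fun n hn _ hg => eventuallyConst_of_mem_Qn hT hn hg (cell_mem_nhds (ht n hn))) hf

end Forward

section Snap

variable {Y : Type*} [UniformSpace Y] {T : ℝ} {n : ℕ}

def gridSnap (hT : 0 ≤ T) (n : ℕ) (x : Icc (0 : ℝ) T) : Icc (0 : ℝ) T :=
  projIcc 0 T hT (cellMid ((x : ℝ) * n / T) * T / n)

theorem coe_gridSnap (hT : 0 < T) (hn : 0 < n) (x : Icc (0 : ℝ) T) :
    (gridSnap hT.le n x : ℝ) = cellMid ((x : ℝ) * n / T) * T / n := by
  have hn' : (0 : ℝ) < n := by exact_mod_cast hn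
  have hx₀ : ¬cellMid ((x : ℝ) * n / T) < ((0 : ℤ) : ℝ) := by
    rw [cellMid_lt_intCast_iff, Int.cast_zero, not_lt]
    exact div_nonneg (mul_nonneg x.2.1 hn'.le) hT.le
  have hxn : ¬((n : ℤ) : ℝ) < cellMid ((x : ℝ) * n / T) := by
    rw [intCast_lt_cellMid_iff, Int.cast_natCast, not_lt, div_le_iff₀ hT, mul_comm]
    exact mul_le_mul_of_nonneg_left x.2.2 hn'.le
  push_cast [not_lt] at hx₀ hxn
  rw [gridSnap, projIcc_of_mem]
  constructor
  · positivity
  · rw [div_le_iff₀ hn', mul_comm]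
    exact mul_le_mul_of_nonneg_left hxn hT.le

theorem gridSnap_mul_div (hT : 0 < T) (hn : 0 < n) (x : Icc (0 : ℝ) T) :
    (gridSnap hT.le n x : ℝ) * n / T = cellMid ((x : ℝ) * n / T) := by
  have hn' : (n : ℝ) ≠ 0 := by exact_mod_cast hn.ne'
  rw [coe_gridSnap hT hn]
  field_simp

theorem dist_gridSnap_lt (hT : 0 < T) (hn : 0 < n) (x : Icc (0 : ℝ) T) :
    dist (gridSnap hT.le n x) x < T / n := by
  have hTn : 0 < T / n := div_pos hT (by exact_mod_cast hn)
  rw [Subtype.dist_eq, Real.dist_eq, coe_gridSnap hT hn]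
  calc |cellMid ((x : ℝ) * n / T) * T / n - x|
      = |cellMid ((x : ℝ) * n / T) - (x : ℝ) * n / T| * (T / n) := by
        rw [← abs_of_pos hTn, ← abs_mul]
        congr 1
        field_simp
    _ ≤ 1 / 2 * (T / n) := by gcongr; exact abs_cellMid_sub_le _
    _ < T / n := by linarith

theorem gridSnap_eq_self (hT : 0 < T) (hn : 0 < n) {x : Icc (0 : ℝ) T} {j : ℤ}
    (hx : (x : ℝ) * n / T = j) : gridSnap hT.le n x = x := by
  have hn' : (n : ℝ) ≠ 0 := by exact_mod_cast hn.ne'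
  ext
  rw [coe_gridSnap hT hn, hx, cellMid_intCast, ← hx]
  field_simp

theorem gridSnap_lt_iff (hT : 0 < T) (hn : 0 < n) {x t : Icc (0 : ℝ) T} {j : ℤ}
    (ht : (t : ℝ) * n / T = j) : gridSnap hT.le n x < t ↔ x < t := by
  change (gridSnap hT.le n x : ℝ) < t ↔ (x : ℝ) < t
  rw [← mul_div_lt_mul_div_iff hT hn, gridSnap_mul_div hT hn, ht, cellMid_lt_intCast_iff, ← ht,
    mul_div_lt_mul_div_iff hT hn]

theorem lt_gridSnap_iff (hT : 0 < T) (hn : 0 < n) {x t : Icc (0 : ℝ) T} {j : ℤ}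
    (ht : (t : ℝ) * n / T = j) : t < gridSnap hT.le n x ↔ t < x := by
  change (t : ℝ) < gridSnap hT.le n x ↔ (t : ℝ) < x
  rw [← mul_div_lt_mul_div_iff hT hn, gridSnap_mul_div hT hn, ht, intCast_lt_cellMid_iff, ← ht,
    mul_div_lt_mul_div_iff hT hn]

theorem comp_gridSnap_mem_Qn (hT : 0 < T) (hn : 0 < n) (F : Icc (0 : ℝ) T → Y) :
    UniformFun.ofFun (F ∘ gridSnap hT.le n) ∈ Qn Y T n :=
  (mem_Qn_iff hT hn).2 fun k s s' hs hs' => by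
    simp only [UniformFun.toFun_ofFun, Function.comp_apply, gridSnap, cellMid_of_mem_Ioo hs,
      cellMid_of_mem_Ioo hs']

end Snap

section Backward

variable {Y : Type*} [UniformSpace Y] {T : ℝ}

theorem tendsto_uniformity_nhdsGT {F : Icc (0 : ℝ) T → Y}
    (hF : ∀ t : Icc (0 : ℝ) T, (t : ℝ) < T → ∃ y, Tendsto F (𝓝[>] t) (𝓝 y)) (t : Icc (0 : ℝ) T) :
    Tendsto (fun p => (F p.1, F p.2)) (𝓝[>] t ×ˢ 𝓝[>] t) (𝓤 Y) := by
  rcases t.2.2.lt_or_eq with ht | ht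
  · obtain ⟨y, hy⟩ := hF t ht
    exact hy.tendsto_uniformity
  · have : Ioi t = ∅ :=
      eq_empty_of_forall_notMem fun s (hs : (t : ℝ) < s) => (hs.trans_le s.2.2).ne ht
    simp [this]

theorem tendsto_uniformity_nhdsLT {F : Icc (0 : ℝ) T → Y}
    (hF : ∀ t : Icc (0 : ℝ) T, 0 < (t : ℝ) → ∃ y, Tendsto F (𝓝[<] t) (𝓝 y)) (t : Icc (0 : ℝ) T) :
    Tendsto (fun p => (F p.1, F p.2)) (𝓝[<] t ×ˢ 𝓝[<] t) (𝓤 Y) := by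
  rcases t.2.1.lt_or_eq with ht | ht
  · obtain ⟨y, hy⟩ := hF t ht
    exact hy.tendsto_uniformity
  · have : Iio t = ∅ :=
      eq_empty_of_forall_notMem fun s (hs : (s : ℝ) < t) => (s.2.1.trans_lt hs).ne ht
    simp [this]

theorem mem_Qspace_of_tendsto_uniformity (hT : 0 < T) {f : PathSpace Y T}
    (hlt : ∀ t, Tendsto (fun p => (UniformFun.toFun f p.1, UniformFun.toFun f p.2))
      (𝓝[<] t ×ˢ 𝓝[<] t) (𝓤 Y))
    (hgt : ∀ t, Tendsto (fun p => (UniformFun.toFun f p.1, UniformFun.toFun f p.2))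
      (𝓝[>] t ×ˢ 𝓝[>] t) (𝓤 Y))
    (hc : ∀ t : Icc (0 : ℝ) T, Irrational (t / T) → ContinuousAt (UniformFun.toFun f) t) :
    f ∈ Qspace Y T := by
  classical
  rw [Qspace, mem_closure_iff_nhds_basis (UniformFun.hasBasis_nhds _ _ f)]
  intro U hU
  choose δ hδ hδU using fun t => exists_radius_of_tendsto_uniformity (hlt t) (hgt t)
    (fun h => (hc t h).tendsto.tendsto_uniformity) hU
  obtain ⟨S, ε, hε, hSε⟩ := exists_finset_lebesgue_number δ hδ
  obtain ⟨n, hTn, hgrid⟩ := exists_nat_ge_forall_mul_eq_intCast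
    (S.image fun t : Icc (0 : ℝ) T => (t : ℝ) / T) (⌊T / ε⌋₊ + 1)
  have hn : 0 < n := by omega
  have hnε : T / n < ε := by
    have : T / ε < n := (Nat.lt_floor_add_one _).trans_le (by exact_mod_cast hTn)
    rw [div_lt_iff₀ hε] at this
    rwa [div_lt_iff₀ (by exact_mod_cast hn), mul_comm]
  refine ⟨_, mem_iUnion₂.2 ⟨n, hn, comp_gridSnap_mem_Qn hT hn (UniformFun.toFun f)⟩, fun x => ?_⟩
  change (UniformFun.toFun f x, UniformFun.toFun f (gridSnap hT.le n x)) ∈ U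
  obtain ⟨t, htS, hball⟩ := hSε x
  have hx := hball (Metric.mem_ball_self hε)
  have hsx := hball ((dist_gridSnap_lt hT hn x).trans hnε)
  by_cases hirr : Irrational (t / T)
  · exact hδU t x hx _ hsx (.inr (.inr hirr))
  -- `t` is now a grid point, so `x` and its snap cannot lie on different sides of it.
  obtain ⟨j, hj⟩ := hgrid _ (Finset.mem_image_of_mem _ htS) hirr
  rw [div_mul_eq_mul_div] at hj
  rcases lt_trichotomy x t with hxt | rfl | htx
  · exact hδU t x hx _ hsx (.inl ⟨hxt, (gridSnap_lt_iff hT hn hj).2 hxt⟩)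
  · rw [gridSnap_eq_self hT hn hj]
    exact refl_mem_uniformity hU
  · exact hδU t x hx _ hsx (.inr (.inl ⟨htx, (lt_gridSnap_iff hT hn hj).2 htx⟩))

end Backward

theorem Qspace_eq_of_seqComplete_general {Y : Type*} [UniformSpace Y] (T : ℝ) (hT : 0 < T)
    (hseq : ∀ u : ℕ → Y, CauchySeq u → ∃ y : Y, Tendsto u atTop (nhds y)) :
    Qspace Y T =
      {f : PathSpace Y T |
        (∀ r : ℝ, Irrational r → ∀ (hr : T * r ∈ Set.Icc (0 : ℝ) T),
          ContinuousAt (UniformFun.toFun f) ⟨T * r, hr⟩) ∧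
        (∀ t : Set.Icc (0 : ℝ) T, (t : ℝ) < T → ∃ y : Y,
          Tendsto (UniformFun.toFun f)
            (nhdsWithin t {s : Set.Icc (0 : ℝ) T | (t : ℝ) < (s : ℝ)}) (nhds y)) ∧
        (∀ t : Set.Icc (0 : ℝ) T, 0 < (t : ℝ) → ∃ y : Y,
          Tendsto (UniformFun.toFun f)
            (nhdsWithin t {s : Set.Icc (0 : ℝ) T | (s : ℝ) < (t : ℝ)}) (nhds y))} := by
  ext f
  constructor
  · intro hf
    refine ⟨fun r hr _ => continuousAt_of_mem_Qspace hT hf fun n hn j => ?_,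
      fun t ht => exists_tendsto_nhdsGT_of_mem_Qspace hT hseq hf ht,
      fun t ht => exists_tendsto_nhdsLT_of_mem_Qspace hT hseq hf ht⟩
    rw [mul_assoc, mul_div_cancel_left₀ _ hT.ne']
    exact (hr.mul_natCast hn.ne').ne_int j
  · rintro ⟨hc, hgt, hlt⟩
    refine mem_Qspace_of_tendsto_uniformity hT (tendsto_uniformity_nhdsLT hlt)
      (tendsto_uniformity_nhdsGT hgt) fun t ht => ?_
    have htT : T * (t / T) = t := mul_div_cancel₀ _ hT.ne'
    have hmem : T * (t / T) ∈ Icc (0 : ℝ) T := by rw [htT]; exact t.2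
    convert hc _ ht hmem
    exact htT.symm

/-- If `Y` is sequentially complete, `Q([0,T];Y)` coincides with the set of functions that
are continuous at every irrational multiple of `T` in `[0,T]`, have right limits on `[0,T)`
and left limits on `(0,T]`. -/
theorem Qspace_eq_of_seqComplete {Y : Type*} [AddCommGroup Y] [Module ℝ Y]
    [UniformSpace Y] [IsUniformAddGroup Y] [ContinuousSMul ℝ Y] [LocallyConvexSpace ℝ Y]
    [T2Space Y] (T : ℝ) (hT : 0 < T)
    (hseq : ∀ u : ℕ → Y, CauchySeq u → ∃ y : Y, Tendsto u atTop (nhds y)) :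
    Qspace Y T =
      {f : PathSpace Y T |
        (∀ r : ℝ, Irrational r → ∀ (hr : T * r ∈ Set.Icc (0 : ℝ) T),
          ContinuousAt (UniformFun.toFun f) ⟨T * r, hr⟩) ∧
        (∀ t : Set.Icc (0 : ℝ) T, (t : ℝ) < T → ∃ y : Y,
          Tendsto (UniformFun.toFun f)
            (nhdsWithin t {s : Set.Icc (0 : ℝ) T | (t : ℝ) < (s : ℝ)}) (nhds y)) ∧
        (∀ t : Set.Icc (0 : ℝ) T, 0 < (t : ℝ) → ∃ y : Y,
          Tendsto (UniformFun.toFun f)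
            (nhdsWithin t {s : Set.Icc (0 : ℝ) T | (s : ℝ) < (t : ℝ)}) (nhds y))} :=
  Qspace_eq_of_seqComplete_general T hT hseq
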